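/- arXiv:0707.1102 — 9 statements merged into one kernel-verified Lean document; each statement's English description precedes it below -/
import Mathlib

section
/- Let p > 5 be a prime, let m > n > 0 be integers, and let a be a nonzero element of the finite field F_p. If the polynomial f = x^m + a·x^n induces a bijection of F_p (i.e., f is a permutation polynomial of F_p), then gcd(m - n, p - 1) is not equal to 2 and is not equal to 4. -/
/-!
Hermite's criterion: if `f = x^m + a x^n` permutes `𝔽_q`, then `∑ₓ f(x)^t = ∑ᵧ y^t = 0` for
`0 < t < q - 1`. Expanding `f^t` binomially and using `∑ₓ x^e = -[q - 1 ∣ e]` for `e > 0`, the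
terms `C(t, j) a^(t-j)` over the `j ≤ t` with `q - 1 ∣ nt + (m - n)j` sum to zero.

Let `d = gcd(m - n, p - 1)` and `p - 1 = dQ`. For `t = ds` the condition reads `j ≡ cs (mod Q)`
for some fixed `c`, and if `d ≤ Q` the least `s` for which the residue of `cs` is at most `ds`
leaves exactly one such `j` (unless `Q = d ∣ n`). The lone term `C(t, j) a^(t-j)` is nonzero
since `t < p`, a contradiction. For `d = 2` this applies as `p > 5`. For `d = 4` the exception
`p = 17`, `4 ∣ n` makes `m` and `n` even, so `f(1) = f(-1)`; and `p = 13`, where `Q = 3 < d`,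
is checked directly at `t = 4`.
-/

open Polynomial Finset Function

theorem add_mul_pow_eq_sum {R : Type*} [CommSemiring R] {m n : ℕ} (hnm : n ≤ m) (a x : R)
    (t : ℕ) : (x ^ m + a * x ^ n) ^ t =
      ∑ j ∈ range (t + 1), (t.choose j : R) * a ^ (t - j) * x ^ (n * t + (m - n) * j) := by
  rw [add_pow]
  refine sum_congr rfl fun j hj => ?_
  have hexp : m * j + n * (t - j) = n * t + (m - n) * j := by
    have : j ≤ t := Nat.lt_succ_iff.mp (mem_range.mp hj)
    zify [this, hnm]
    ring
  rw [← hexp, pow_add, pow_mul, pow_mul, mul_pow]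
  ring

section FiniteField

variable {K : Type*} [Field K] [Fintype K]

theorem FiniteField.sum_pow_eq_ite {e : ℕ} (he : e ≠ 0) :
    ∑ x : K, x ^ e = if Fintype.card K - 1 ∣ e then -1 else 0 := by
  classical
  rw [← sum_pow_units K e]
  refine (sum_subset (subset_univ (univ.map ⟨((↑) : Kˣ → K), Units.val_injective⟩))
    fun x _ hx => ?_).symm.trans (sum_map _ _ _)
  obtain rfl : x = 0 := not_not.mp fun h => hx (by simpa using ⟨Units.mk0 x h, rfl⟩)
  exact zero_pow he

theorem sum_choose_mul_pow_eq_zero_of_bijective {m n : ℕ} (hnm : n ≤ m) (hn : 0 < n) {a : K}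
    (hf : Bijective fun x : K => x ^ m + a * x ^ n) {t : ℕ} (ht : 0 < t)
    (htq : t < Fintype.card K - 1) :
    ∑ j ∈ (range (t + 1)).filter (fun j => Fintype.card K - 1 ∣ n * t + (m - n) * j),
      (t.choose j : K) * a ^ (t - j) = 0 := by
  have hsum := calc
    0 = ∑ y : K, y ^ t := (FiniteField.sum_pow_lt_card_sub_one K t htq).symm
    _ = ∑ x : K, (x ^ m + a * x ^ n) ^ t := (hf.sum_comp (· ^ t)).symm
    _ = ∑ j ∈ range (t + 1),
          (t.choose j : K) * a ^ (t - j) * ∑ x : K, x ^ (n * t + (m - n) * j) := by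
      simp_rw [add_mul_pow_eq_sum hnm, mul_sum]
      exact sum_comm
  simp_rw [FiniteField.sum_pow_eq_ite (Nat.add_pos_left (Nat.mul_pos hn ht) _).ne', mul_ite,
    mul_neg_one, mul_zero, ← sum_filter, sum_neg_distrib] at hsum
  exact neg_eq_zero.mp hsum.symm

end FiniteField

theorem exists_val_mul_le_lt {Q d : ℕ} [NeZero Q] (c : ZMod Q) (hd : 0 < d) (hdQ : d ≤ Q)
    (hc : Q = d → c ≠ 0) :
    ∃ s : ℕ, 0 < s ∧ d * s ≤ Q + d - 2 ∧ (c * s).val ≤ d * s ∧ d * s < (c * s).val + Q := by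
  have hQ : 2 ≤ Q := by
    by_contra hQ
    obtain rfl : Q = 1 := by omega
    exact hc (by omega) (Subsingleton.elim _ _)
  have hex : ∃ s : ℕ, 0 < s ∧ (c * s).val ≤ d * s := ⟨Q, NeZero.pos Q, by simp⟩
  have hfind : ∃ s : ℕ, (0 < s ∧ (c * s).val ≤ d * s) ∧
      ∀ s' < s, 0 < s' → d * s' < (c * s').val :=
    ⟨_, Nat.find_spec hex, fun s' h hs' => not_le.mp fun h' => Nat.find_min hex h ⟨hs', h'⟩⟩
  obtain ⟨s, ⟨hs, hrs⟩, hmin⟩ := hfind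
  suffices d * s ≤ Q + d - 2 ∧ d * s < (c * s).val + Q from ⟨s, hs, this.1, hrs, this.2⟩
  have hcval := ZMod.val_lt c
  rcases (show s = 1 ∨ 2 ≤ s by omega) with rfl | h2
  · simp only [Nat.cast_one, mul_one] at hrs ⊢
    have : Q = d → 0 < c.val := fun h => ZMod.val_pos.mpr (hc h)
    omega
  · -- the minimality of `s` at `1` and at `s - 1` forces a wrap-around modulo `Q`
    obtain ⟨k, rfl⟩ := Nat.exists_eq_add_of_le' h2
    have h1 : d < c.val := by simpa using hmin 1 (by omega) one_pos
    have hk : d * (k + 1) < (c * ((k + 1 : ℕ) : ZMod Q)).val := hmin (k + 1) (by omega) (by omega)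
    have hkval := ZMod.val_lt (c * ((k + 1 : ℕ) : ZMod Q))
    have hstep : (c * ((k + 2 : ℕ) : ZMod Q)).val =
        ((c * ((k + 1 : ℕ) : ZMod Q)).val + c.val) % Q := by
      rw [← ZMod.val_add]; push_cast; ring_nf
    have hdk : d * (k + 2) = d * (k + 1) + d := by ring
    rw [hstep] at hrs ⊢
    rcases lt_or_ge ((c * ((k + 1 : ℕ) : ZMod Q)).val + c.val) Q with hlt | hge
    · rw [Nat.mod_eq_of_lt hlt] at hrs; omega
    · rw [Nat.mod_eq_sub_mod hge, Nat.mod_eq_of_lt (by omega)]; omega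

theorem exists_dvd_iff_natCast_eq_mul {N D d Q : ℕ} (n : ℕ) (hd : D.gcd N = d)
    (hN : N = d * Q) (hd0 : 0 < d) :
    ∃ c : ZMod Q, (c = 0 → (n : ZMod Q) = 0) ∧
      ∀ s j : ℕ, N ∣ n * (d * s) + D * j ↔ (j : ZMod Q) = c * s := by
  obtain ⟨u, rfl⟩ : d ∣ D := hd ▸ Nat.gcd_dvd_left D N
  have hcop : u.Coprime Q := by
    apply Nat.eq_of_mul_eq_mul_left hd0
    rw [← Nat.gcd_mul_left, ← hN, hd, mul_one]
  set U := ZMod.unitOfCoprime u hcop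
  have hU : (↑U⁻¹ : ZMod Q) * u = 1 := U.inv_mul
  refine ⟨-n * ↑U⁻¹, fun hc => by simpa using hc, fun s j => ?_⟩
  rw [hN, show n * (d * s) + d * u * j = d * (n * s + u * j) by ring,
    Nat.mul_dvd_mul_iff_left hd0, ← ZMod.natCast_eq_zero_iff]
  push_cast
  constructor
  · intro h
    linear_combination (↑U⁻¹ : ZMod Q) * h - (j : ZMod Q) * hU
  · intro h
    linear_combination (u : ZMod Q) * h - (n * s : ZMod Q) * hU

theorem exists_filter_dvd_eq_singleton {N D d Q : ℕ} (n : ℕ) (hd : D.gcd N = d)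
    (hN : N = d * Q) (hd0 : 0 < d) (hdQ : d ≤ Q) (hQn : Q = d → ¬Q ∣ n) :
    ∃ t r : ℕ, 0 < t ∧ t < N ∧ (range (t + 1)).filter (fun j => N ∣ n * t + D * j) = {r} := by
  have : NeZero Q := ⟨by omega⟩
  obtain ⟨c, hc0, hc⟩ := exists_dvd_iff_natCast_eq_mul n hd hN hd0
  obtain ⟨s, hs, hsQ, hrs, hsr⟩ := exists_val_mul_le_lt c hd0 hdQ
    fun h hc' => hQn h ((ZMod.natCast_eq_zero_iff n Q).mp (hc0 hc'))
  refine ⟨d * s, (c * s).val, Nat.mul_pos hd0 hs, ?_, ?_⟩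
  · have : Q + d ≤ d * Q + 1 := by nlinarith
    omega
  ext j
  have hrQ := ZMod.val_lt (c * (s : ZMod Q))
  rw [mem_filter, mem_range, mem_singleton, hc]
  constructor
  · rintro ⟨hj, hjr⟩
    have hmod := (ZMod.natCast_eq_natCast_iff _ _ _).mp (hjr.trans (ZMod.natCast_zmod_val _).symm)
    exact hmod.eq_of_abs_lt (abs_sub_lt_iff.mpr ⟨by omega, by omega⟩)
  · rintro rfl
    exact ⟨by omega, ZMod.natCast_zmod_val _⟩

theorem not_bijective_of_filter_dvd_eq_singleton {p : ℕ} [Fact p.Prime] {m n : ℕ} (hnm : n ≤ m)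
    (hn : 0 < n) {a : ZMod p} (ha : a ≠ 0) {t r : ℕ} (ht : 0 < t) (htp : t < p - 1)
    (hr : (range (t + 1)).filter (fun j => p - 1 ∣ n * t + (m - n) * j) = {r}) :
    ¬Bijective fun x : ZMod p => x ^ m + a * x ^ n := by
  intro hf
  have hsum := sum_choose_mul_pow_eq_zero_of_bijective hnm hn hf ht (by rwa [ZMod.card])
  rw [ZMod.card, hr, sum_singleton] at hsum
  have hrt : r ≤ t :=
    Nat.lt_succ_iff.mp (mem_range.mp (mem_filter.mp (hr ▸ mem_singleton_self r)).1)
  have hchoose : (t.choose r : ZMod p) ≠ 0 := by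
    rw [Ne, ZMod.natCast_eq_zero_iff]
    intro hdvd
    have := (Nat.Prime.dvd_factorial Fact.out).mp
      (hdvd.trans (Dvd.intro _ (by rw [← mul_assoc, Nat.choose_mul_factorial_mul_factorial hrt])))
    omega
  exact mul_ne_zero hchoose (pow_ne_zero _ ha) hsum

theorem not_bijective_of_sq_gcd_le {p : ℕ} [Fact p.Prime] {m n d : ℕ} (hnm : n < m)
    (hn : 0 < n) {a : ZMod p} (ha : a ≠ 0) (hd : (m - n).gcd (p - 1) = d)
    (hdp : d * d ≤ p - 1) (hdn : d * d = p - 1 → ¬d ∣ n) :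
    ¬Bijective fun x : ZMod p => x ^ m + a * x ^ n := by
  have hp := (Fact.out : p.Prime).two_le
  have hd0 : 0 < d := hd ▸ Nat.gcd_pos_of_pos_right _ (by omega)
  obtain ⟨Q, hQ⟩ : d ∣ p - 1 := hd ▸ Nat.gcd_dvd_right _ _
  obtain ⟨t, r, ht, htp, hr⟩ := exists_filter_dvd_eq_singleton n hd hQ hd0
    (Nat.le_of_mul_le_mul_left (hQ ▸ hdp) hd0) fun hQd hQn => hdn (by rw [hQ, hQd]) (hQd ▸ hQn)
  exact not_bijective_of_filter_dvd_eq_singleton hnm.le hn ha ht htp hr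

-- The sums are `a^4 + 4a`, `4a^3 + 1` and `6a^2`; the first two vanish only if `a^3 = -4` resp.
-- `a^3 = -1/4`, which are not cubes in `𝔽₁₃`.
theorem sum_filter_choose_mul_pow_ne_zero_zmod_thirteen (a : ZMod 13) (ha : a ≠ 0)
    (c : ZMod 3) :
    ∑ j ∈ (range 5).filter (fun j : ℕ => (j : ZMod 3) = c),
      (Nat.choose 4 j : ZMod 13) * a ^ (4 - j) ≠ 0 := by
  revert a c
  decide

theorem not_bijective_zmod_thirteen {m n : ℕ} (hnm : n < m) (hn : 0 < n) {a : ZMod 13}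
    (ha : a ≠ 0) (hd : (m - n).gcd 12 = 4) :
    ¬Bijective fun x : ZMod 13 => x ^ m + a * x ^ n := by
  have : Fact (Nat.Prime 13) := ⟨by norm_num⟩
  obtain ⟨c, -, hc⟩ := exists_dvd_iff_natCast_eq_mul (Q := 3) n hd rfl four_pos
  intro hf
  have hsum := sum_choose_mul_pow_eq_zero_of_bijective hnm.le hn hf four_pos (by simp)
  simp only [ZMod.card, show 13 - 1 = 12 from rfl,
    filter_congr fun j _ => by simpa using hc 1 j] at hsum
  exact sum_filter_choose_mul_pow_ne_zero_zmod_thirteen a ha c hsum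

theorem not_injective_add_mul_pow_of_even {R : Type*} [Ring R] (h : (-1 : R) ≠ 1) {m n : ℕ}
    (hm : Even m) (hn : Even n) (a : R) : ¬Injective fun x : R => x ^ m + a * x ^ n :=
  fun hf => h (hf (by simp [hm.neg_one_pow, hn.neg_one_pow]))

theorem stmt_0 (p : ℕ) (hp : p.Prime) (hp5 : 5 < p)
    (m n : ℕ) (hmn : m > n) (hn : n > 0)
    (a : ZMod p) (ha : a ≠ 0)
    (hperm : Function.Bijective
      (fun x : ZMod p => Polynomial.eval x (X ^ m + C a * X ^ n))) :
    Nat.gcd (m - n) (p - 1) ≠ 2 ∧ Nat.gcd (m - n) (p - 1) ≠ 4 := by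
  have : Fact p.Prime := ⟨hp⟩
  have hf : Bijective fun x : ZMod p => x ^ m + a * x ^ n := by simpa using hperm
  refine ⟨fun hd => not_bijective_of_sq_gcd_le hmn hn ha hd (by omega) (by omega) hf,
    fun hd => ?_⟩
  obtain rfl | hp13 := eq_or_ne p 13
  · exact not_bijective_zmod_thirteen hmn hn ha hd hf
  have hp9 : p ≠ 9 := by rintro rfl; norm_num at hp
  have h4 : 4 ∣ p - 1 := hd ▸ Nat.gcd_dvd_right _ _
  have h4mn : 4 ∣ m - n := hd ▸ Nat.gcd_dvd_left _ _
  refine not_bijective_of_sq_gcd_le hmn hn ha hd (by omega) (fun _ h4n => ?_) hf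
  have : Fact (2 < p) := ⟨by omega⟩
  exact not_injective_add_mul_pow_of_even ZMod.neg_one_ne_one (Nat.even_iff.mpr (by omega))
    (Nat.even_iff.mpr (by omega)) a hf.injective
end

section
/- Let q be a prime power with q > 1 and let f be a polynomial over the finite field F_q that is a permutation polynomial of F_q. Then the greatest common divisor of the degrees of the (nonzero) terms of f (i.e., the gcd of the elements of the support of f) is coprime to q - 1. -/
/-! If a prime `p` divides both `q - 1` and every exponent of `f`, Cauchy's theorem gives `ζ ∈ F×`
of order `p`; then `ζ ^ e = 1` for every exponent `e`, so `f(ζ) = f(1)` and `f` is not injective. -/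

open Polynomial

theorem Polynomial.eval_mul_eq_of_pow_eq_one {R : Type*} [CommSemiring R] {f : R[X]} {d : ℕ}
    (hd : ∀ n ∈ f.support, d ∣ n) {ζ : R} (hζ : ζ ^ d = 1) (x : R) :
    f.eval (ζ * x) = f.eval x := by
  rw [eval_eq_sum, eval_eq_sum, Polynomial.sum, Polynomial.sum]
  refine Finset.sum_congr rfl fun n hn => ?_
  obtain ⟨k, rfl⟩ := hd n hn
  rw [mul_pow, pow_mul, hζ, one_pow, one_mul]

theorem FiniteField.exists_ne_one_pow_eq_one_of_prime_dvd {F : Type*} [Field F] [Fintype F] {p : ℕ}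
    (hp : p.Prime) (hpF : p ∣ Fintype.card F - 1) : ∃ ζ : F, ζ ≠ 1 ∧ ζ ^ p = 1 := by
  classical
  have : Fact p.Prime := ⟨hp⟩
  obtain ⟨u, hu⟩ := exists_prime_orderOf_dvd_card (G := Fˣ) p (by rwa [Fintype.card_units])
  have hup : (u : F) ^ p = 1 := by
    rw [← Units.val_pow_eq_pow_val, ← hu, pow_orderOf_eq_one, Units.val_one]
  refine ⟨u, fun h => hp.ne_one ?_, hup⟩
  rw [← hu, show u = 1 from Units.ext h, orderOf_one]

theorem Polynomial.coprime_support_gcd_card_sub_one_of_injective {F : Type*} [Field F] [Fintype F]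
    {f : F[X]} (hf : Function.Injective fun x => f.eval x) :
    Nat.Coprime (f.support.gcd id) (Fintype.card F - 1) := by
  refine Nat.coprime_of_dvd fun p hp hpd hpF => ?_
  obtain ⟨ζ, hζ1, hζp⟩ := FiniteField.exists_ne_one_pow_eq_one_of_prime_dvd hp hpF
  have hexp : ∀ n ∈ f.support, p ∣ n := fun n hn => hpd.trans (Finset.gcd_dvd hn)
  refine hζ1 (hf ?_)
  simpa using f.eval_mul_eq_of_pow_eq_one hexp hζp 1

theorem stmt_1_general (q : ℕ)
    (F : Type*) [Field F] [Fintype F] (hcard : Fintype.card F = q)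
    (f : Polynomial F)
    (hperm : Function.Bijective (fun x : F => Polynomial.eval x f)) :
    Nat.Coprime (f.support.gcd id) (q - 1) :=
  hcard ▸ coprime_support_gcd_card_sub_one_of_injective hperm.injective

theorem stmt_1 (q : ℕ) (hq : IsPrimePow q) (hq1 : 1 < q)
    (F : Type*) [Field F] [Fintype F] (hcard : Fintype.card F = q)
    (f : Polynomial F)
    (hperm : Function.Bijective (fun x : F => Polynomial.eval x f)) :
    Nat.Coprime (f.support.gcd id) (q - 1) :=
  stmt_1_general q F hcard f hperm
end

section
/- Let q be a prime power, let n, k be positive integers, and let a be a nonzero element of F_q. Set d = gcd(k, q - 1). If f(x) = x^n·(x^k + a) is a permutation polynomial of F_q that is nontrivial (i.e., q - 1 does not divide k), then there exists a positive integer e such that x^e·(x^d + a) is a nontrivial permutation polynomial of F_q (i.e., it permutes F_q and q - 1 does not divide d). -/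
/-!
Write `N = q - 1` and `d = gcd k N`. Since `k / d` is a unit modulo `N / d`, it lifts to a unit
`u` modulo `N`, so `u * d ≡ k [MOD N]`. On `F`, a power `x ^ s` with `s ≠ 0` only depends on
`s` modulo `N`, so `x ↦ x ^ u` is a permutation, and choosing `e` with `u * e ≡ n [MOD N]` gives
`(x ^ u) ^ e * ((x ^ u) ^ d + a) = x ^ n * (x ^ k + a)`. Hence `x ^ e * (x ^ d + a)` permutes `F`,
and `N ∤ d` because `d ∣ k`.
-/

open Polynomial

theorem Nat.exists_coprime_mul_gcd_modEq {N : ℕ} (hN : N ≠ 0) (k : ℕ) :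
    ∃ u, 0 < u ∧ u.Coprime N ∧ u * k.gcd N ≡ k [MOD N] := by
  have : NeZero N := ⟨hN⟩
  have hd : 0 < k.gcd N := Nat.gcd_pos_of_pos_right k (Nat.pos_of_ne_zero hN)
  have hdN : N / k.gcd N ∣ N := Nat.div_dvd_of_dvd (Nat.gcd_dvd_right k N)
  obtain ⟨U, hU⟩ := ZMod.unitsMap_surjective hdN
    (ZMod.unitOfCoprime _ (Nat.coprime_div_gcd_div_gcd hd))
  refine ⟨(U : ZMod N).val + N, by omega,
    Nat.coprime_add_self_left.mpr (ZMod.val_coe_unit_coprime U), ?_⟩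
  have hmod : (U : ZMod N).val + N ≡ k / k.gcd N [MOD N / k.gcd N] := by
    have hUk := congrArg Units.val hU
    rw [ZMod.unitsMap_val, ZMod.coe_unitOfCoprime, ZMod.cast_eq_val] at hUk
    rw [← ZMod.natCast_eq_natCast_iff, ← hUk, Nat.cast_add,
      (ZMod.natCast_eq_zero_iff _ _).mpr hdN, add_zero]
  simpa only [Nat.div_mul_cancel (Nat.gcd_dvd_left k N),
    Nat.div_mul_cancel (Nat.gcd_dvd_right k N)] using hmod.mul_right' (k.gcd N)

theorem Nat.mul_pow_totient_sub_one_modEq_one {u N : ℕ} (hN : N ≠ 0) (hu : u.Coprime N) :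
    u * u ^ (N.totient - 1) ≡ 1 [MOD N] := by
  have := Nat.ModEq.pow_totient hu
  rwa [← Nat.sub_add_cancel (Nat.totient_pos.mpr (Nat.pos_of_ne_zero hN)), pow_succ'] at this

namespace FiniteField

variable {F : Type*} [Field F] [Fintype F]

theorem pow_eq_pow_of_modEq (x : F) {s t : ℕ} (hs : s ≠ 0) (ht : t ≠ 0)
    (h : s ≡ t [MOD Fintype.card F - 1]) : x ^ s = x ^ t := by
  rcases eq_or_ne x 0 with rfl | hx
  · simp [hs, ht]
  · exact (IsUnit.mk0 x hx).isOfFinOrder.pow_eq_pow_iff_modEq.mpr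
      (h.of_dvd (orderOf_dvd_of_pow_eq_one (pow_card_sub_one_eq_one x hx)))

theorem card_sub_one_ne_zero : Fintype.card F - 1 ≠ 0 := by
  have := Fintype.one_lt_card (α := F)
  omega

theorem pow_bijective_of_coprime {u : ℕ} (hu₀ : u ≠ 0) (hu : u.Coprime (Fintype.card F - 1)) :
    Function.Bijective fun x : F => x ^ u := by
  have hv : u * u ^ ((Fintype.card F - 1).totient - 1) ≠ 0 := by positivity
  have hinv : ∀ x : F, (x ^ u) ^ u ^ ((Fintype.card F - 1).totient - 1) = x := fun x => by
    rw [← pow_mul, pow_eq_pow_of_modEq x hv one_ne_zero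
      (Nat.mul_pow_totient_sub_one_modEq_one card_sub_one_ne_zero hu), pow_one]
  exact (Function.LeftInverse.injective hinv).bijective_of_finite

end FiniteField

theorem stmt_2_general (q : ℕ)
    (F : Type*) [Field F] [Fintype F] (hcard : Fintype.card F = q)
    (n k : ℕ) (hn : 0 < n) (a : F)
    (hnontriv : ¬ (q - 1) ∣ k)
    (hperm : Function.Bijective
      (fun x : F => Polynomial.eval x (X ^ n * (X ^ k + C a)))) :
    ∃ e : ℕ, 0 < e ∧
      Function.Bijective
        (fun x : F => Polynomial.eval x (X ^ e * (X ^ Nat.gcd k (q - 1) + C a))) ∧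
      ¬ (q - 1) ∣ Nat.gcd k (q - 1) := by
  subst hcard
  set N := Fintype.card F - 1
  have hN : N ≠ 0 := FiniteField.card_sub_one_ne_zero
  have hk : k ≠ 0 := by rintro rfl; exact hnontriv (dvd_zero N)
  obtain ⟨u, hu₀, hu, hud⟩ := Nat.exists_coprime_mul_gcd_modEq hN k
  set e := n * u ^ (N.totient - 1)
  have hue : u * e ≡ n [MOD N] := by
    simpa [e, mul_left_comm] using (Nat.mul_pow_totient_sub_one_modEq_one hN hu).mul_left n
  have hcomp : (fun x : F => eval x (X ^ e * (X ^ k.gcd N + C a))) ∘ (· ^ u) =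
      fun x => eval x (X ^ n * (X ^ k + C a)) := by
    funext x
    simp only [Function.comp_apply, eval_mul, eval_pow, eval_add, eval_X, eval_C, ← pow_mul]
    rw [FiniteField.pow_eq_pow_of_modEq x (by positivity) hn.ne' hue,
      FiniteField.pow_eq_pow_of_modEq x (by positivity) hk hud]
  refine ⟨e, by positivity, ?_, fun h => hnontriv (h.trans (Nat.gcd_dvd_left k N))⟩
  rw [← hcomp] at hperm
  exact (Function.Bijective.of_comp_iff _ (FiniteField.pow_bijective_of_coprime hu₀.ne' hu)).mp hperm

theorem stmt_2 (q : ℕ) (hq : IsPrimePow q)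
    (F : Type*) [Field F] [Fintype F] (hcard : Fintype.card F = q)
    (n k : ℕ) (hn : 0 < n) (hk : 0 < k) (a : F) (ha : a ≠ 0)
    (hnontriv : ¬ (q - 1) ∣ k)
    (hperm : Function.Bijective
      (fun x : F => Polynomial.eval x (X ^ n * (X ^ k + C a)))) :
    ∃ e : ℕ, 0 < e ∧
      Function.Bijective
        (fun x : F => Polynomial.eval x (X ^ e * (X ^ Nat.gcd k (q - 1) + C a))) ∧
      ¬ (q - 1) ∣ Nat.gcd k (q - 1) :=
  stmt_2_general q F hcard n k hn a hnontriv hperm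
end

section
/- Let q be a prime power such that q - 1 is a Mersenne prime (that is, q - 1 is prime and q is a power of 2, i.e., q - 1 = 2^s - 1 for some s). Then there is no nontrivial permutation binomial over F_q: there do not exist positive integers n, k with (q - 1) ∤ k and a nonzero element a of F_q such that x^n·(x^k + a) is a permutation polynomial of F_q. -/
open Polynomial

theorem FiniteField.exists_ne_zero_pow_eq_of_coprime {F : Type*} [Field F] [Fintype F] {k : ℕ}
    (hk : (Fintype.card F - 1).Coprime k) {b : F} (hb : b ≠ 0) : ∃ u : F, u ≠ 0 ∧ u ^ k = b := by
  classical
  have hcard : Nat.card Fˣ = Fintype.card F - 1 := by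
    rw [Nat.card_eq_fintype_card, Fintype.card_units]
  obtain ⟨u, hu⟩ := (powCoprime (hcard ▸ hk)).surjective (Units.mk0 b hb)
  exact ⟨u, u.ne_zero, by simpa [powCoprime] using congrArg Units.val hu⟩

theorem Polynomial.not_injective_eval_X_pow_mul {R : Type*} [CommSemiring R] {n : ℕ}
    (hn : 0 < n) {g : R[X]} {u : R} (hu : u ≠ 0) (hg : g.IsRoot u) :
    ¬ Function.Injective (fun x : R => eval x (X ^ n * g)) := fun hinj =>
  hu <| hinj <| by simp [hg.eq_zero, zero_pow hn.ne']

theorem stmt_3_general (q : ℕ)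
    (hmersenne : Nat.Prime (q - 1))
    (F : Type*) [Field F] [Fintype F] (hcard : Fintype.card F = q) :
    ¬ ∃ (n k : ℕ) (a : F), 0 < n ∧ 0 < k ∧ ¬ (q - 1) ∣ k ∧ a ≠ 0 ∧
      Function.Bijective
        (fun x : F => Polynomial.eval x (X ^ n * (X ^ k + C a))) := by
  rintro ⟨n, k, a, hn, -, hndvd, ha, hbij⟩
  have hcop : (Fintype.card F - 1).Coprime k :=
    hcard ▸ (Nat.Prime.coprime_iff_not_dvd hmersenne).mpr hndvd
  obtain ⟨u, hu, huk⟩ := FiniteField.exists_ne_zero_pow_eq_of_coprime hcop (neg_ne_zero.mpr ha)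
  have hroot : (X ^ k + C a).IsRoot u := by simp [huk]
  exact not_injective_eval_X_pow_mul hn hu hroot hbij.injective

theorem stmt_3 (q s : ℕ) (hq : IsPrimePow q) (hq2 : q = 2 ^ s)
    (hmersenne : Nat.Prime (q - 1))
    (F : Type*) [Field F] [Fintype F] (hcard : Fintype.card F = q) :
    ¬ ∃ (n k : ℕ) (a : F), 0 < n ∧ 0 < k ∧ ¬ (q - 1) ∣ k ∧ a ≠ 0 ∧
      Function.Bijective
        (fun x : F => Polynomial.eval x (X ^ n * (X ^ k + C a))) :=
  stmt_3_general q hmersenne F hcard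
end

section
/- Let q be a prime power and let f be a polynomial over F_q. Then f is a permutation polynomial of F_q if and only if both of the following hold: (1) for each integer i with 0 < i < q - 1, the remainder of f^i upon division by x^q - x has degree strictly less than q - 1; and (2) f has precisely one root in F_q. -/
/-!
Fermat's little theorem makes `y ^ (q - 1)` the indicator of `y ≠ 0`, so for `φ : 𝔽_q → 𝔽_q` the
size of the fibre `φ⁻¹(a)`, read in `𝔽_q`, is `-∑ₓ (φ x - a) ^ (q - 1)`. Expanding binomially, the
vanishing of the power sums `∑ₓ φ(x) ^ i` for `i < q - 1` makes this independent of `a`; a unique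
zero then gives every fibre size `≡ 1 (mod p)`, so `φ` is onto.

For `φ = f` these power sums are read off the reduction `r` of `f ^ i` modulo `X ^ q - X`: `r` has
degree `< q`, agrees with `f ^ i` on `𝔽_q`, and `∑ₓ r(x) = -r_{q-1}`, since `∑ₓ x ^ k` vanishes for
`k < q - 1` and equals `-1` for `k = q - 1`.
-/

open Polynomial Finset

theorem Finset.sum_sub_pow_of_sum_pow_eq_zero {α R : Type*} [CommRing R] (s : Finset α)
    (φ : α → R) {n : ℕ} (h : ∀ i < n, ∑ x ∈ s, φ x ^ i = 0) (a : R) :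
    ∑ x ∈ s, (φ x - a) ^ n = ∑ x ∈ s, φ x ^ n := by
  calc ∑ x ∈ s, (φ x - a) ^ n
      = ∑ i ∈ range (n + 1), (∑ x ∈ s, φ x ^ i) * ((-1) ^ (i + n) * a ^ (n - i) * n.choose i) := by
        simp_rw [sub_pow, sum_mul]
        rw [sum_comm]
        exact sum_congr rfl fun _ _ => sum_congr rfl fun _ _ => by ring
    _ = ∑ x ∈ s, φ x ^ n := by
        rw [sum_range_succ, sum_eq_zero fun i hi => by rw [h i (mem_range.1 hi), zero_mul]]
        simp [← two_mul, pow_mul]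

namespace FiniteField

variable {F : Type*} [Field F] [Fintype F]

theorem sum_pow_card_sub_one_eq_card_ne_zero [DecidableEq F] {α : Type*} [Fintype α]
    (ψ : α → F) : ∑ x, ψ x ^ (Fintype.card F - 1) = #{x | ψ x ≠ 0} := by
  have hq : Fintype.card F - 1 ≠ 0 := by have := Fintype.one_lt_card (α := F); omega
  rw [natCast_card_filter]
  refine sum_congr rfl fun x _ => ?_
  split_ifs with hx
  · exact pow_card_sub_one_eq_one _ hx
  · rw [not_not.1 hx, zero_pow hq]

theorem sum_pow_card_sub_one : ∑ x : F, x ^ (Fintype.card F - 1) = -1 := by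
  classical
  have hq := Fintype.card_pos (α := F)
  refine (sum_pow_card_sub_one_eq_card_ne_zero fun x : F => x).trans ?_
  rw [filter_ne', card_erase_of_mem (mem_univ _), card_univ, Nat.cast_sub hq, cast_card_eq_zero,
    Nat.cast_one, zero_sub]

theorem card_fiber_eq_card_fiber_zero [DecidableEq F] {φ : F → F}
    (h : ∀ i < Fintype.card F - 1, ∑ x, φ x ^ i = 0) (a : F) :
    (#{x | φ x = a} : F) = #{x | φ x = 0} := by
  have key (b : F) : (#{x | φ x = b} : F) = -∑ x, (φ x - b) ^ (Fintype.card F - 1) := by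
    rw [sum_pow_card_sub_one_eq_card_ne_zero, eq_neg_iff_add_eq_zero]
    simp_rw [sub_ne_zero]
    rw [← Nat.cast_add, card_filter_add_card_filter_not, card_univ, cast_card_eq_zero]
  rw [key, key, sum_sub_pow_of_sum_pow_eq_zero _ _ h, sum_sub_pow_of_sum_pow_eq_zero _ _ h]

theorem bijective_iff_sum_pow_eq_zero_and_existsUnique_eq_zero (φ : F → F) :
    Function.Bijective φ ↔
      (∀ i, 0 < i → i < Fintype.card F - 1 → ∑ x, φ x ^ i = 0) ∧ ∃! x, φ x = 0 := by
  classical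
  refine ⟨fun hφ => ⟨fun i _ hi => ?_, hφ.existsUnique 0⟩, fun ⟨hsum, hzero⟩ => ?_⟩
  · rw [Fintype.sum_bijective φ hφ _ (· ^ i) fun _ => rfl]
    exact sum_pow_lt_card_sub_one F i hi
  have hsum' : ∀ i < Fintype.card F - 1, ∑ x, φ x ^ i = 0 := by
    intro i hi
    rcases i.eq_zero_or_pos with rfl | hi0
    · simp
    · exact hsum i hi0 hi
  refine Function.Surjective.bijective_of_finite fun a => ?_
  have hfiber : (#{x | φ x = a} : F) = 1 := by
    rw [card_fiber_eq_card_fiber_zero hsum', (Fintype.existsUnique_iff_card_one _).1 hzero,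
      Nat.cast_one]
  obtain ⟨x, hx⟩ : ({x | φ x = a} : Finset F).Nonempty :=
    card_pos.1 <| Nat.pos_of_ne_zero fun h0 => by simp [h0] at hfiber
  exact ⟨x, (mem_filter.1 hx).2⟩

end FiniteField

namespace Polynomial

theorem degree_lt_iff_coeff_eq_zero_of_natDegree_le {R : Type*} [Semiring R] {p : R[X]} {n : ℕ}
    (hp : p.natDegree ≤ n) : p.degree < n ↔ p.coeff n = 0 := by
  rw [degree_lt_iff_coeff_zero]
  refine ⟨fun h => h n le_rfl, fun h m hm => ?_⟩
  rcases hm.eq_or_lt with rfl | hm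
  · exact h
  · exact coeff_eq_zero_of_natDegree_lt (hp.trans_lt hm)

variable {F : Type*} [Field F] [Fintype F]

theorem sum_eval_eq_neg_coeff_card_sub_one {g : F[X]} (hg : g.natDegree < Fintype.card F) :
    ∑ x, g.eval x = -g.coeff (Fintype.card F - 1) := by
  have hq : Fintype.card F = Fintype.card F - 1 + 1 := by
    have := Fintype.one_lt_card (α := F); omega
  simp_rw [eval_eq_sum_range' hg]
  rw [sum_comm]
  simp_rw [← mul_sum]
  rw [hq, sum_range_succ, sum_eq_zero fun i hi => by
    rw [FiniteField.sum_pow_lt_card_sub_one F i (mem_range.1 hi), mul_zero], ← hq, zero_add,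
    FiniteField.sum_pow_card_sub_one, mul_neg_one]

theorem eval_modByMonic_X_pow_card_sub_X (g : F[X]) (x : F) :
    (g %ₘ (X ^ Fintype.card F - X)).eval x = g.eval x := by
  rw [modByMonic_eq_sub_mul_div, eval_sub, eval_mul, eval_sub, eval_pow, eval_X,
    FiniteField.pow_card, sub_self, zero_mul, sub_zero]

theorem natDegree_modByMonic_X_pow_card_sub_X_lt (g : F[X]) :
    (g %ₘ (X ^ Fintype.card F - X)).natDegree < Fintype.card F := by
  have hq := Fintype.one_lt_card (α := F)
  have hnat := FiniteField.X_pow_card_sub_X_natDegree_eq F hq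
  refine (natDegree_modByMonic_lt g ?_ fun h => ?_).trans_eq hnat
  · exact monic_X_pow_sub (by rw [degree_X]; exact_mod_cast hq)
  · rw [h, natDegree_one] at hnat
    omega

theorem degree_modByMonic_X_pow_card_sub_X_lt_iff (g : F[X]) :
    (g %ₘ (X ^ Fintype.card F - X)).degree < ((Fintype.card F - 1 : ℕ) : WithBot ℕ) ↔
      ∑ x, g.eval x = 0 := by
  have hdeg := natDegree_modByMonic_X_pow_card_sub_X_lt g
  rw [degree_lt_iff_coeff_eq_zero_of_natDegree_le (by omega), ← neg_eq_zero,
    ← sum_eval_eq_neg_coeff_card_sub_one hdeg]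
  simp_rw [eval_modByMonic_X_pow_card_sub_X]

end Polynomial

theorem stmt_5_general (q : ℕ)
    (F : Type*) [Field F] [Fintype F] (hcard : Fintype.card F = q)
    (f : Polynomial F) :
    Function.Bijective (fun x : F => Polynomial.eval x f) ↔
      ((∀ i : ℕ, 0 < i → i < q - 1 →
          ((f ^ i) %ₘ (X ^ q - X)).degree < ((q - 1 : ℕ) : WithBot ℕ)) ∧
        (∃! x : F, Polynomial.eval x f = 0)) := by
  subst hcard
  simp only [FiniteField.bijective_iff_sum_pow_eq_zero_and_existsUnique_eq_zero,
    degree_modByMonic_X_pow_card_sub_X_lt_iff, eval_pow]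

theorem stmt_5 (q : ℕ) (hq : IsPrimePow q)
    (F : Type*) [Field F] [Fintype F] (hcard : Fintype.card F = q)
    (f : Polynomial F) :
    Function.Bijective (fun x : F => Polynomial.eval x f) ↔
      ((∀ i : ℕ, 0 < i → i < q - 1 →
          ((f ^ i) %ₘ (X ^ q - X)).degree < ((q - 1 : ℕ) : WithBot ℕ)) ∧
        (∃! x : F, Polynomial.eval x f = 0)) :=
  stmt_5_general q F hcard f
end

section
/- Let p be a prime, let n, k be positive integers with (p - 1) ∤ k, and let a be a nonzero element of F_p. If x^n·(x^k + a) is a permutation polynomial of F_p, then gcd(k, p - 1) > 2. -/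
/-!
Hermite's criterion: if `f = x^n (x^k + a)` permutes `𝔽_p`, then `∑ₓ f(x)^e = 0` for
`1 ≤ e ≤ p - 2`. Expanding `f^e` binomially and using that `∑ₓ x^M` is `-1` or `0` according as
`p - 1 ∣ M` or not, this says `∑ C(e, j) a^(e-j) = 0`, summed over the `j ≤ e` with
`p - 1 ∣ ne + jk`. Since `C(e, j) ≠ 0` in `𝔽_p`, no `e` may admit exactly one such `j`.
If `gcd(k, p - 1) = 1`, then `e = p - 2` does: `j` runs over all residues mod `p - 1` and `k`
is invertible. If the gcd is `2`, write `k = 2κ`, `p - 1 = 2u`; then `n` is odd (otherwise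
`f(-1) = f(1)`), and for `e = 2t` the condition reads `j ≡ -νt (mod u)` with `νκ ≡ n`. The least
`t ≥ 1` for which `[0, 2t]` contains such a `j` contains exactly one.
-/

open Polynomial Finset

namespace FiniteField

variable {K : Type*} [Field K] [Fintype K]

theorem sum_pow_eq_ite_s6 {M : ℕ} (hM : M ≠ 0) :
    ∑ x : K, x ^ M = if Fintype.card K - 1 ∣ M then -1 else 0 := by
  classical
  calc ∑ x : K, x ^ M = ∑ x ∈ univ.map ⟨Units.val, Units.val_injective⟩, x ^ M := by
        refine (sum_subset (subset_univ _) fun x _ hx => ?_).symm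
        obtain rfl : x = 0 := by
          by_contra h
          exact hx (mem_map.mpr ⟨Units.mk0 x h, mem_univ _, rfl⟩)
        exact zero_pow hM
    _ = ∑ x : Kˣ, (x : K) ^ M := sum_map _ _ _
    _ = _ := sum_pow_units K M

theorem cast_choose_ne_zero {e r : ℕ} (hre : r ≤ e) (he : e < ringChar K) :
    (e.choose r : K) ≠ 0 := by
  have hp : (ringChar K).Prime := CharP.char_is_prime K _
  rw [Ne, CharP.cast_eq_zero_iff K (ringChar K)]
  intro hdvd
  have : ringChar K ∣ e.factorial := by
    rw [← Nat.choose_mul_factorial_mul_factorial hre, mul_assoc]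
    exact hdvd.mul_right _
  exact absurd (hp.dvd_factorial.mp this) (not_le.mpr he)

theorem sum_filter_choose_mul_pow_eq_zero {n k e : ℕ} {a : K} (hn : 0 < n) (he : 0 < e)
    (heq : e < Fintype.card K - 1) (hf : Function.Bijective fun x : K => x ^ n * (x ^ k + a)) :
    ∑ j ∈ (range (e + 1)).filter (fun j => Fintype.card K - 1 ∣ n * e + j * k),
      (e.choose j : K) * a ^ (e - j) = 0 := by
  have hsum : ∑ x : K, (x ^ n * (x ^ k + a)) ^ e = 0 := by
    rw [hf.sum_comp (· ^ e)]
    exact sum_pow_lt_card_sub_one K e heq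
  have hexpand (x : K) : (x ^ n * (x ^ k + a)) ^ e =
      ∑ j ∈ range (e + 1), x ^ (n * e + j * k) * ((e.choose j : K) * a ^ (e - j)) := by
    rw [mul_pow, add_pow, mul_sum]
    refine sum_congr rfl fun j _ => ?_
    rw [pow_add, pow_mul, pow_mul]
    ring
  rw [sum_congr rfl fun x _ => hexpand x, sum_comm] at hsum
  have hterm : ∀ j ∈ range (e + 1),
      ∑ x : K, x ^ (n * e + j * k) * ((e.choose j : K) * a ^ (e - j)) =
        if Fintype.card K - 1 ∣ n * e + j * k then -((e.choose j : K) * a ^ (e - j)) else 0 := by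
    intro j _
    rw [← sum_mul, sum_pow_eq_ite_s6 (by positivity)]
    split_ifs <;> ring
  rwa [sum_congr rfl hterm, ← sum_filter, sum_neg_distrib, neg_eq_zero] at hsum

theorem not_existsUnique_dvd_of_bijective {n k e : ℕ} {a : K} (hn : 0 < n) (he : 0 < e)
    (heq : e < Fintype.card K - 1) (hechar : e < ringChar K) (ha : a ≠ 0)
    (hf : Function.Bijective fun x : K => x ^ n * (x ^ k + a)) :
    ¬ ∃! j, j ≤ e ∧ Fintype.card K - 1 ∣ n * e + j * k := by
  rintro ⟨r, ⟨hre, hr⟩, huniq⟩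
  have hfilter : (range (e + 1)).filter (fun j => Fintype.card K - 1 ∣ n * e + j * k) = {r} := by
    ext j
    simp only [mem_filter, mem_range, mem_singleton]
    exact ⟨fun ⟨hj, hjd⟩ => huniq j ⟨by omega, hjd⟩, by rintro rfl; exact ⟨by omega, hr⟩⟩
  have hsum := sum_filter_choose_mul_pow_eq_zero hn he heq hf
  rw [hfilter, sum_singleton] at hsum
  exact mul_ne_zero (cast_choose_ne_zero hre hechar) (pow_ne_zero _ ha) hsum

end FiniteField

theorem odd_of_injective_pow_mul_pow_add {R : Type*} [Ring R] {n k : ℕ} {a : R}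
    (h : (-1 : R) ≠ 1) (hk : Even k) (hf : Function.Injective fun x : R => x ^ n * (x ^ k + a)) :
    Odd n := by
  by_contra hn
  rw [Nat.not_odd_iff_even] at hn
  exact h (hf (by simp [hn.neg_one_pow, hk.neg_one_pow]))

namespace Nat

theorem existsUnique_lt_dvd_add {m : ℕ} (hm : 0 < m) (c : ℕ) : ∃! j, j < m ∧ m ∣ c + j := by
  have : NeZero m := ⟨hm.ne'⟩
  refine ⟨(-(c : ZMod m)).val, ⟨ZMod.val_lt _, ?_⟩, fun j ⟨hj, hjd⟩ => ?_⟩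
  · rw [← ZMod.natCast_eq_zero_iff]
    push_cast
    rw [ZMod.natCast_zmod_val, add_neg_cancel]
  · rw [← ZMod.natCast_eq_zero_iff] at hjd
    push_cast at hjd
    rw [← eq_neg_of_add_eq_zero_right hjd, ZMod.val_natCast, Nat.mod_eq_of_lt hj]

theorem exists_lt_mul_modEq {u κ : ℕ} (hu : 0 < u) (hκ : κ.Coprime u) (n : ℕ) :
    ∃ ν < u, ν * κ ≡ n [MOD u] := by
  have : NeZero u := ⟨hu.ne'⟩
  refine ⟨((n : ZMod u) * (κ : ZMod u)⁻¹).val, ZMod.val_lt _, ?_⟩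
  rw [← ZMod.natCast_eq_natCast_iff]
  push_cast
  rw [ZMod.natCast_zmod_val, mul_assoc, mul_comm _ (κ : ZMod u), ZMod.coe_mul_inv_eq_one κ hκ,
    mul_one]

theorem dvd_mul_add_mul_iff {u n κ ν : ℕ} (hκ : κ.Coprime u) (hν : ν * κ ≡ n [MOD u])
    (t j : ℕ) : u ∣ n * t + j * κ ↔ u ∣ ν * t + j := by
  have hmod : n * t + j * κ ≡ κ * (ν * t + j) [MOD u] := by
    calc n * t + j * κ ≡ ν * κ * t + j * κ [MOD u] := (hν.symm.mul_right t).add_right _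
      _ = κ * (ν * t + j) := by ring
  rw [hmod.dvd_iff dvd_rfl, hκ.symm.dvd_mul_left]

theorem exists_existsUnique_le_two_mul_dvd {u ν : ℕ} (hu : 2 ≤ u) (hν : ν < u)
    (h2 : u = 2 → ν ≠ 0) : ∃ t, 0 < t ∧ t < u ∧ ∃! j, j ≤ 2 * t ∧ u ∣ ν * t + j := by
  classical
  let P t := 0 < t ∧ ∃ j ≤ 2 * t, u ∣ ν * t + j
  have hPu : P (u - 1) := by
    obtain ⟨j, ⟨hj, hjd⟩, -⟩ := existsUnique_lt_dvd_add (by omega : 0 < u) (ν * (u - 1))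
    exact ⟨by omega, j, by omega, hjd⟩
  have hP : ∃ t, P t := ⟨u - 1, hPu⟩
  obtain ⟨ht, j, hj, hjd⟩ := Nat.find_spec hP
  have htu : Nat.find hP < u := by have := Nat.find_min' hP hPu; omega
  set t := Nat.find hP
  have hmin : ∀ s < t, ¬ P s := fun s => Nat.find_min hP
  -- a solution `i` with `i + u ≤ 2t` would make `i + ν` a solution for `t - 1`
  have hgap : ∀ i, u ∣ ν * t + i → ¬ i + u ≤ 2 * t := by
    intro i hi hle
    obtain ⟨s, hts⟩ : ∃ s, t = s + 1 := ⟨t - 1, by omega⟩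
    rw [hts] at hi hle
    rcases Nat.eq_zero_or_pos s with rfl | hs
    · obtain rfl : u = 2 := by omega
      obtain rfl : i = 0 := by omega
      exact h2 rfl (Nat.eq_zero_of_dvd_of_lt (by simpa using hi) hν)
    · rcases Nat.lt_or_ge (ν + 1) u with hν' | hν'
      · exact hmin s (by omega) ⟨hs, i + ν, by omega, by convert hi using 1; ring⟩
      · exact hmin 1 (by omega) ⟨one_pos, 1, by omega, by rw [show ν * 1 + 1 = u by omega]⟩
  have hsep : ∀ i i', i < i' → i' ≤ 2 * t → u ∣ ν * t + i → u ∣ ν * t + i' → False := by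
    intro i i' hlt hi' hi hi'd
    have : u ∣ i' - i := by simpa [Nat.add_sub_add_left] using Nat.dvd_sub hi'd hi
    exact hgap i hi (by have := Nat.le_of_dvd (by omega) this; omega)
  refine ⟨t, ht, htu, j, ⟨hj, hjd⟩, fun j' ⟨hj', hj'd⟩ => ?_⟩
  rcases lt_trichotomy j' j with h | h | h
  · exact (hsep _ _ h hj hj'd hjd).elim
  · exact h
  · exact (hsep _ _ h hj' hjd hj'd).elim

theorem exists_existsUnique_dvd_of_coprime (n : ℕ) {m k : ℕ} (hm : 0 < m) (hmk : ¬ m ∣ k)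
    (hk : k.Coprime m) : ∃ e, 0 < e ∧ e < m ∧ ∃! j, j ≤ e ∧ m ∣ n * e + j * k := by
  have hm1 : m ≠ 1 := by rintro rfl; exact hmk (one_dvd k)
  obtain ⟨ν, -, hν⟩ := exists_lt_mul_modEq hm hk n
  refine ⟨m - 1, by omega, by omega, ?_⟩
  refine (existsUnique_congr fun j => ?_).mpr (existsUnique_lt_dvd_add hm (ν * (m - 1)))
  rw [dvd_mul_add_mul_iff hk hν]
  exact and_congr_left' (by omega)

theorem exists_existsUnique_dvd_of_gcd_eq_two {m n k : ℕ} (hm : 0 < m) (hmk : ¬ m ∣ k)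
    (hgcd : k.gcd m = 2) (hn : Odd n) : ∃ e, 0 < e ∧ e < m ∧ ∃! j, j ≤ e ∧ m ∣ n * e + j * k := by
  have hk2 : 2 ∣ k := hgcd ▸ Nat.gcd_dvd_left k m
  have hm2 : 2 ∣ m := hgcd ▸ Nat.gcd_dvd_right k m
  obtain ⟨κ, rfl⟩ := hk2
  obtain ⟨u, rfl⟩ := hm2
  have hu : u ≠ 1 := by rintro rfl; exact hmk (by simp)
  have hκ : κ.Coprime u := by
    have := Nat.gcd_mul_left 2 κ u
    rw [hgcd] at this
    unfold Coprime
    omega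
  obtain ⟨ν, hνu, hν⟩ := exists_lt_mul_modEq (by omega) hκ n
  have h2 : u = 2 → ν ≠ 0 := by
    rintro rfl rfl
    have := Nat.odd_iff.mp hn
    simp only [ModEq, zero_mul, Nat.zero_mod] at hν
    omega
  obtain ⟨t, ht, htu, huniq⟩ := exists_existsUnique_le_two_mul_dvd (by omega) hνu h2
  refine ⟨2 * t, by omega, by omega, (existsUnique_congr fun j => ?_).mp huniq⟩
  rw [← dvd_mul_add_mul_iff hκ hν, show n * (2 * t) + j * (2 * κ) = 2 * (n * t + j * κ) by ring,
    Nat.mul_dvd_mul_iff_left two_pos]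

theorem exists_existsUnique_dvd_of_gcd_le_two {m n k : ℕ} (hm : 0 < m) (hmk : ¬ m ∣ k)
    (hgcd : k.gcd m ≤ 2) (hn : Even k → Odd n) :
    ∃ e, 0 < e ∧ e < m ∧ ∃! j, j ≤ e ∧ m ∣ n * e + j * k := by
  have hpos : 0 < k.gcd m := Nat.gcd_pos_of_pos_right k hm
  rcases (by omega : k.gcd m = 1 ∨ k.gcd m = 2) with h1 | h2
  · exact exists_existsUnique_dvd_of_coprime n hm hmk h1
  · exact exists_existsUnique_dvd_of_gcd_eq_two hm hmk h2
      (hn (even_iff_two_dvd.mpr (h2 ▸ Nat.gcd_dvd_left k m)))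

end Nat

theorem stmt_6_general (p : ℕ) (hp : p.Prime)
    (n k : ℕ) (hn : 0 < n) (hnontriv : ¬ (p - 1) ∣ k)
    (a : ZMod p) (ha : a ≠ 0)
    (hperm : Function.Bijective
      (fun x : ZMod p => Polynomial.eval x (X ^ n * (X ^ k + C a)))) :
    2 < Nat.gcd k (p - 1) := by
  have : Fact p.Prime := ⟨hp⟩
  have hf : Function.Bijective fun x : ZMod p => x ^ n * (x ^ k + a) := by simpa using hperm
  have : Fact (2 < p) := ⟨hp.two_le.lt_of_ne fun h => hnontriv (by simp [← h])⟩
  by_contra! hgcd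
  have hodd (hk2 : Even k) : Odd n :=
    odd_of_injective_pow_mul_pow_add ZMod.neg_one_ne_one hk2 hf.injective
  obtain ⟨e, he, hep, huniq⟩ :=
    Nat.exists_existsUnique_dvd_of_gcd_le_two (Nat.sub_pos_of_lt hp.one_lt) hnontriv hgcd hodd
  refine FiniteField.not_existsUnique_dvd_of_bijective hn he ?_ ?_ ha hf ?_
  · rwa [ZMod.card]
  · rw [ZMod.ringChar_zmod_n]
    omega
  · rwa [ZMod.card]

theorem stmt_6 (p : ℕ) (hp : p.Prime)
    (n k : ℕ) (hn : 0 < n) (hk : 0 < k) (hnontriv : ¬ (p - 1) ∣ k)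
    (a : ZMod p) (ha : a ≠ 0)
    (hperm : Function.Bijective
      (fun x : ZMod p => Polynomial.eval x (X ^ n * (X ^ k + C a)))) :
    2 < Nat.gcd k (p - 1) :=
  stmt_6_general p hp n k hn hnontriv a ha hperm
end

section
/- Let p be a prime, let n be a positive integer with (p - 1) ∤ 2 (i.e., p > 3), and let a be a nonzero element of F_p. Then the polynomial x^n·(x^2 + a) is not a permutation polynomial of F_p. -/
/-!
Hermite's criterion: if `f` permutes `𝔽_p` then `∑ₓ f(x)^k = 0` for every `0 < k < p - 1`.
For `f = xⁿ(x² + a)` the binomial theorem turns `∑ₓ f(x)^k` into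
`∑_{j ≤ k} C(k, j) a^(k-j) ∑ₓ x^(nk+2j)`, and an inner sum is `-1` when `p - 1 ∣ nk + 2j`
and `0` otherwise. Writing `p - 1 = 2h`, the exponent `k = h - 1`, or `k = h` when `n` is odd and
`h` is even, makes exactly one `j ≤ k` satisfy the divisibility, so the power sum is
`-C(k, j₀) a^(k-j₀)`, which is nonzero because `k < p`.
-/

open Polynomial Finset

namespace FiniteField

variable {K : Type*} [Field K] [Fintype K]

theorem sum_pow_of_ne_zero [DecidableEq K] {e : ℕ} (he : e ≠ 0) :
    ∑ x : K, x ^ e = if Fintype.card K - 1 ∣ e then -1 else 0 := by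
  rw [← sum_pow_units K e, ← sum_sdiff (subset_univ {0}), sum_singleton, zero_pow he, add_zero]
  symm
  exact sum_bij (fun u _ ↦ (u : K)) (fun u _ ↦ by simp) (fun _ _ _ _ h ↦ Units.val_injective h)
    (fun x hx ↦ ⟨Units.mk0 x (by simpa using hx), by simp⟩) (fun _ _ ↦ rfl)

theorem sum_pow_comp_eq_zero_of_bijective {f : K → K} (hf : Function.Bijective f) {k : ℕ}
    (hk : k < Fintype.card K - 1) : ∑ x, f x ^ k = 0 := by
  rw [Fintype.sum_bijective f hf _ (· ^ k) fun _ ↦ rfl]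
  exact sum_pow_lt_card_sub_one K k hk

theorem sum_pow_pow_mul_sq_add (a : K) {n k j₀ : ℕ} (hnk : 0 < n * k) (hj₀ : j₀ ≤ k)
    (hdvd : Fintype.card K - 1 ∣ n * k + 2 * j₀)
    (huniq : ∀ j ≤ k, Fintype.card K - 1 ∣ n * k + 2 * j → j = j₀) :
    ∑ x : K, (x ^ n * (x ^ 2 + a)) ^ k = -((k.choose j₀ : K) * a ^ (k - j₀)) := by
  classical
  calc ∑ x : K, (x ^ n * (x ^ 2 + a)) ^ k
      = ∑ j ∈ range (k + 1), (k.choose j : K) * a ^ (k - j) * ∑ x : K, x ^ (n * k + 2 * j) := by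
        simp_rw [mul_sum]
        rw [sum_comm]
        refine sum_congr rfl fun x _ ↦ ?_
        rw [mul_pow, ← pow_mul, add_pow, mul_sum]
        refine sum_congr rfl fun j _ ↦ ?_
        rw [pow_add, pow_mul]
        ring
    _ = ∑ j ∈ range (k + 1), (k.choose j : K) * a ^ (k - j) *
          if Fintype.card K - 1 ∣ n * k + 2 * j then -1 else 0 := by
        refine sum_congr rfl fun j _ ↦ ?_
        rw [sum_pow_of_ne_zero (by positivity)]
    _ = -((k.choose j₀ : K) * a ^ (k - j₀)) := by
        rw [sum_eq_single_of_mem j₀ (mem_range_succ_iff.mpr hj₀), if_pos hdvd, mul_neg_one]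
        intro j hj hne
        rw [if_neg fun h ↦ hne (huniq j (mem_range_succ_iff.mp hj) h), mul_zero]

end FiniteField

theorem Nat.exists_lt_dvd_add (c : ℕ) {h : ℕ} (hh : 0 < h) : ∃ j < h, h ∣ c + j := by
  have : NeZero h := ⟨hh.ne'⟩
  refine ⟨(-c : ZMod h).val, ZMod.val_lt _, ?_⟩
  rw [← ZMod.natCast_eq_zero_iff, Nat.cast_add, ZMod.natCast_zmod_val, add_neg_cancel]

theorem Nat.eq_of_dvd_add_two_mul {m A j j₀ : ℕ} (hj : m ∣ A + 2 * j) (hj₀ : m ∣ A + 2 * j₀)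
    (hlt : 2 * j < m + 2 * j₀) (hlt₀ : 2 * j₀ < m + 2 * j) : j = j₀ := by
  have := Nat.eq_zero_of_dvd_of_lt (Nat.dvd_sub hj hj₀) (by omega)
  have := Nat.eq_zero_of_dvd_of_lt (Nat.dvd_sub hj₀ hj) (by omega)
  omega

theorem exists_exponent_with_unique_term {h : ℕ} (hh : 2 ≤ h) (n : ℕ) :
    ∃ k j₀, 0 < k ∧ k < 2 * h ∧ j₀ ≤ k ∧ 2 * h ∣ n * k + 2 * j₀ ∧
      ∀ j ≤ k, 2 * h ∣ n * k + 2 * j → j = j₀ := by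
  by_cases heven : Even (n * (h - 1))
  · obtain ⟨c, hc⟩ := heven
    obtain ⟨j₀, hj₀, hdvd⟩ := Nat.exists_lt_dvd_add c (show 0 < h by omega)
    have hdvd' : 2 * h ∣ n * (h - 1) + 2 * j₀ := by
      rw [hc, ← two_mul, ← mul_add]; exact mul_dvd_mul_left 2 hdvd
    exact ⟨h - 1, j₀, by omega, by omega, by omega, hdvd', fun j hj hj' ↦
      Nat.eq_of_dvd_add_two_mul hj' hdvd' (by omega) (by omega)⟩
  · obtain ⟨hn, hh'⟩ := not_or.mp (mt Nat.even_mul.mpr heven)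
    obtain ⟨s, rfl⟩ := Nat.not_even_iff_odd.mp hn
    obtain ⟨t, rfl⟩ : ∃ t, h = 2 * t := ⟨h / 2, by grind⟩
    have hdvd : 2 * (2 * t) ∣ (2 * s + 1) * (2 * t) + 2 * t := ⟨s + 1, by ring⟩
    exact ⟨2 * t, t, by omega, by omega, by omega, hdvd, fun j hj hj' ↦
      Nat.eq_of_dvd_add_two_mul hj' hdvd (by omega) (by omega)⟩

theorem ZMod.natCast_choose_ne_zero {p : ℕ} (hp : p.Prime) {k j : ℕ} (hk : k < p) (hj : j ≤ k) :
    (k.choose j : ZMod p) ≠ 0 := by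
  rw [Ne, ZMod.natCast_eq_zero_iff]
  exact (Nat.Prime.coprime_iff_not_dvd hp).mp (hp.coprime_choose_of_lt hk hj)

theorem stmt_8 (p : ℕ) (hp : p.Prime) (hnontriv : ¬ (p - 1) ∣ 2)
    (n : ℕ) (hn : 0 < n) (a : ZMod p) (ha : a ≠ 0) :
    ¬ Function.Bijective
      (fun x : ZMod p => Polynomial.eval x (X ^ n * (X ^ 2 + C a))) := by
  intro hbij
  have : Fact p.Prime := ⟨hp⟩
  have hp2 : p ≠ 2 := by rintro rfl; exact hnontriv (by norm_num)
  have hp3 : p ≠ 3 := by rintro rfl; exact hnontriv (by norm_num)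
  obtain ⟨h, hh⟩ := (hp.even_sub_one hp2).two_dvd
  have h2 : 2 ≤ h := by have := hp.two_le; omega
  obtain ⟨k, j₀, hk, hkp, hj₀, hdvd, huniq⟩ := exists_exponent_with_unique_term h2 n
  rw [← hh, ← ZMod.card p] at hdvd huniq
  have hsum :=
    FiniteField.sum_pow_comp_eq_zero_of_bijective hbij (k := k) (by rw [ZMod.card]; omega)
  simp only [eval_mul, eval_pow, eval_add, eval_X, eval_C] at hsum
  rw [FiniteField.sum_pow_pow_mul_sq_add a (by positivity) hj₀ hdvd huniq, neg_eq_zero] at hsum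
  exact mul_ne_zero (ZMod.natCast_choose_ne_zero hp (by omega) hj₀) (pow_ne_zero _ ha) hsum
end

section
/- Let p be a prime with p ≡ 1 (mod 4) and p > 5, let n be a positive integer, and let a be a nonzero element of F_p. Then the polynomial x^n·(x^4 + a) is not a permutation polynomial of F_p. -/
/-!
If `n` is even, `f(x) = xⁿ(x⁴ + a)` is an even function and `f(-1) = f(1)`. If `n` is odd and
`f` permutes `F_q`, then `f(0) = 0`, so `f` permutes the nonzero elements; comparing `∏_{x ≠ 0} f(x)`
with `∏_{x ≠ 0} x = -1` (Wilson) gives `∏_{x ≠ 0} (x⁴ + a) = 1`. As `x` runs over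
the nonzero elements, `x⁴` runs four times over the `m`-th roots of unity, `m = (q - 1)/4`, so this
product is `(b - 1)⁴` with `b = (-a)ᵐ`. But `b⁴ = 1` and `(b - 1)⁴ = 1` force `15 = 0` in `F_q`.
-/

open Polynomial Finset

theorem Function.Periodic.prod_range_mul_eq_pow {M : Type*} [CommMonoid M] {f : ℕ → M} {m : ℕ}
    (hf : Function.Periodic f m) (d : ℕ) :
    ∏ j ∈ range (m * d), f j = (∏ j ∈ range m, f j) ^ d := by
  induction d with
  | zero => simp
  | succ d ih =>
    rw [mul_add_one, prod_range_add, ih, pow_succ]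
    congr 1
    refine prod_congr rfl fun j _ => ?_
    have h := hf.nat_mul d j
    rwa [Nat.cast_id, mul_comm d, add_comm] at h

theorem Function.Bijective.prod_erase_eq {α M : Type*} [Fintype α] [DecidableEq α] [CommMonoid M]
    {f : α → α} (hf : Function.Bijective f) {a : α} (ha : f a = a) (F : α → M) :
    ∏ x ∈ univ.erase a, F (f x) = ∏ x ∈ univ.erase a, F x := by
  refine prod_nbij f (fun x hx => ?_) hf.1.injOn (fun y hy => ?_) fun _ _ => rfl
  · exact mem_erase.2 ⟨fun h => (mem_erase.1 hx).1 (hf.1 (h.trans ha.symm)), mem_univ _⟩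
  · obtain ⟨x, rfl⟩ := hf.2 y
    exact ⟨x, mem_erase.2 ⟨fun h => (mem_erase.1 hy).1 (h ▸ ha), mem_univ _⟩, rfl⟩

theorem fifteen_eq_zero_of_pow_four_eq_one {R : Type*} [CommRing R] [IsDomain R] {b : R}
    (hb : b ^ 4 = 1) (hb1 : (b - 1) ^ 4 = 1) : (15 : R) = 0 := by
  have h : (b - 1) * (b + 1) * (b ^ 2 + 1) = 0 := by linear_combination hb
  simp only [mul_eq_zero] at h
  rcases h with (h | h) | h
  · linear_combination 15 * ((b - 1) ^ 3 * h - hb1)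
  · linear_combination hb1 - (b - 3) * (b ^ 2 - 2 * b + 5) * h
  · linear_combination 3 * ((b ^ 2 - 4 * b + 5) * h - hb1)

theorem not_injective_pow_mul_pow_four_add_of_even {R : Type*} [Ring R] [Nontrivial R]
    (hR : ringChar R ≠ 2) {n : ℕ} (hn : Even n) (a : R) :
    ¬ Function.Injective fun x : R => x ^ n * (x ^ 4 + a) :=
  fun hf => hR (neg_one_eq_one_iff.1 (hf (by norm_num [hn.neg_one_pow])))

namespace FiniteField

variable {K : Type*} [Field K] [Fintype K]

theorem exists_isPrimitiveRoot_card_sub_one : ∃ g : K, IsPrimitiveRoot g (Fintype.card K - 1) := by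
  classical
  obtain ⟨g, hg⟩ := IsCyclic.exists_ofOrder_eq_natCard (α := Kˣ)
  refine ⟨g, ?_⟩
  rw [← Fintype.card_units, ← Nat.card_eq_fintype_card, ← hg, ← orderOf_units]
  exact IsPrimitiveRoot.orderOf _

section DecidableEq

variable [DecidableEq K]

theorem prod_erase_zero_id_eq_neg_one : ∏ x ∈ univ.erase (0 : K), x = -1 := by
  have h := congrArg Units.val (prod_univ_units_id_eq_neg_one (K := K))
  rw [Units.coe_prod, Units.val_neg, Units.val_one] at h
  rw [← h, prod_subtype (univ.erase 0) (p := (· ≠ 0)) (by simp)]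
  exact (Equiv.prod_comp (unitsEquivNeZero (G₀ := K)) (fun x => (x : K))).symm

theorem prod_erase_zero_eq_prod_range_pow {M : Type*} [CommMonoid M] {g : K}
    (hg : IsPrimitiveRoot g (Fintype.card K - 1)) (F : K → M) :
    ∏ x ∈ univ.erase 0, F x = ∏ j ∈ range (Fintype.card K - 1), F (g ^ j) := by
  have hq : Fintype.card K - 1 ≠ 0 := by have := Fintype.one_lt_card (α := K); omega
  have : NeZero (Fintype.card K - 1) := ⟨hq⟩
  have hg0 : g ≠ 0 := hg.ne_zero hq
  refine (prod_nbij (g ^ ·) (fun j _ => mem_erase.2 ⟨pow_ne_zero _ hg0, mem_univ _⟩)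
    hg.injOn_pow (fun x hx => ?_) fun _ _ => rfl).symm
  obtain ⟨j, hj, rfl⟩ := hg.eq_pow_of_pow_eq_one (pow_card_sub_one_eq_one x (mem_erase.1 hx).1)
  exact ⟨j, mem_range.2 hj, rfl⟩

theorem prod_erase_zero_X_sub_C_pow {d : ℕ} (hd : d ∣ Fintype.card K - 1) :
    ∏ x ∈ univ.erase (0 : K), (X - C (x ^ d)) = (X ^ ((Fintype.card K - 1) / d) - 1) ^ d := by
  obtain ⟨g, hg⟩ := exists_isPrimitiveRoot_card_sub_one (K := K)
  set m := (Fintype.card K - 1) / d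
  have hq : 0 < Fintype.card K - 1 := by have := Fintype.one_lt_card (α := K); omega
  have hmd : Fintype.card K - 1 = m * d := (Nat.div_mul_cancel hd).symm
  have hm : 0 < m := Nat.pos_of_mul_pos_right (hmd ▸ hq)
  have hζ : IsPrimitiveRoot (g ^ d) m := hg.pow hq (hmd.trans (mul_comm m d))
  calc ∏ x ∈ univ.erase (0 : K), (X - C (x ^ d))
      = ∏ j ∈ range (m * d), (X - C ((g ^ d) ^ j)) := by
        rw [prod_erase_zero_eq_prod_range_pow hg, hmd]
        simp only [pow_right_comm]
    _ = (∏ j ∈ range m, (X - C ((g ^ d) ^ j))) ^ d :=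
        Function.Periodic.prod_range_mul_eq_pow (fun j => by simp [pow_add, hζ.pow_eq_one]) d
    _ = (X ^ m - 1) ^ d := by
        have h := X_pow_sub_C_eq_prod hζ hm (one_pow m)
        simp only [C_1, mul_one] at h
        rw [h]

theorem prod_erase_zero_pow_add {d : ℕ} (hd : d ∣ Fintype.card K - 1) (hd2 : Even d) (a : K) :
    ∏ x ∈ univ.erase (0 : K), (x ^ d + a) = ((-a) ^ ((Fintype.card K - 1) / d) - 1) ^ d := by
  have h := congrArg (eval (-a)) (prod_erase_zero_X_sub_C_pow hd)
  simp only [eval_prod, eval_sub, eval_X, eval_C, eval_pow, eval_one] at h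
  have hq : Even #(univ.erase (0 : K)) := by
    rw [card_erase_of_mem (mem_univ _), card_univ]
    exact even_iff_two_dvd.2 (hd2.two_dvd.trans hd)
  rw [← h, ← one_mul (∏ x ∈ univ.erase (0 : K), (-a - x ^ d)), ← hq.neg_one_pow, ← prod_neg]
  exact prod_congr rfl fun x _ => by ring

end DecidableEq

theorem fifteen_eq_zero_of_bijective_pow_mul_pow_four_add (hK : 4 ∣ Fintype.card K - 1)
    {n : ℕ} (hn : Odd n) {a : K} (ha : a ≠ 0)
    (hf : Function.Bijective fun x : K => x ^ n * (x ^ 4 + a)) : (15 : K) = 0 := by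
  classical
  set b := (-a) ^ ((Fintype.card K - 1) / 4)
  have hb : b ^ 4 = 1 := by
    rw [← pow_mul, Nat.div_mul_cancel hK]
    exact pow_card_sub_one_eq_one _ (neg_ne_zero.2 ha)
  have hprod := hf.prod_erase_eq (a := 0) (by simp [hn.pos.ne']) id
  simp only [id, prod_mul_distrib, prod_pow, prod_erase_zero_id_eq_neg_one, hn.neg_one_pow,
    prod_erase_zero_pow_add hK (by decide)] at hprod
  exact fifteen_eq_zero_of_pow_four_eq_one hb (by linear_combination -hprod)

theorem not_bijective_pow_mul_pow_four_add (hK : 4 ∣ Fintype.card K - 1) (h15 : (15 : K) ≠ 0)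
    (n : ℕ) {a : K} (ha : a ≠ 0) : ¬ Function.Bijective fun x : K => x ^ n * (x ^ 4 + a) := by
  intro hf
  rcases Nat.even_or_odd n with hn | hn
  · refine not_injective_pow_mul_pow_four_add_of_even ?_ hn a hf.1
    rw [Ne, even_card_iff_char_two]
    have := Fintype.card_pos (α := K)
    omega
  · exact h15 (fifteen_eq_zero_of_bijective_pow_mul_pow_four_add hK hn ha hf)

end FiniteField

theorem stmt_9_general (p : ℕ) (hp : p.Prime) (hp1 : p % 4 = 1) (hp5 : 5 < p)
    (n : ℕ) (a : ZMod p) (ha : a ≠ 0) :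
    ¬ Function.Bijective
      (fun x : ZMod p => Polynomial.eval x (X ^ n * (X ^ 4 + C a))) := by
  have : Fact p.Prime := ⟨hp⟩
  have h15 : (15 : ZMod p) ≠ 0 := by
    intro h
    have h15 : p ∣ 3 * 5 := (ZMod.natCast_eq_zero_iff _ p).1 (by exact_mod_cast h)
    rcases hp.dvd_mul.1 h15 with h | h <;> have := Nat.le_of_dvd (by norm_num) h <;> omega
  simpa using FiniteField.not_bijective_pow_mul_pow_four_add (by rw [ZMod.card]; omega) h15 n ha

theorem stmt_9 (p : ℕ) (hp : p.Prime) (hp1 : p % 4 = 1) (hp5 : 5 < p)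
    (n : ℕ) (hn : 0 < n) (a : ZMod p) (ha : a ≠ 0) :
    ¬ Function.Bijective
      (fun x : ZMod p => Polynomial.eval x (X ^ n * (X ^ 4 + C a))) :=
  stmt_9_general p hp hp1 hp5 n a ha
end

section
/- Let p = 2ℓ + 1 be a prime with ℓ > 1 even, let n be an odd positive integer, and let a be a nonzero element of F_p. Then for f = x^n·(x^2 + a), the remainder of f^{ℓ} upon division by x^p - x has degree equal to p - 1; in particular f is not a permutation polynomial of F_p. -/
/-!
Summing the values of a polynomial over a finite field `K` with `q` elements recovers minus
the coefficient of `X ^ (q - 1)` in its reduction modulo `X ^ q - X`, because `∑ x, x ^ i`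
vanishes unless `0 < i` and `q - 1 ∣ i`. For `f = X ^ n * (X ^ 2 + a)` and `q = 2ℓ + 1`, the
binomial expansion of `f ^ ℓ` has exponents `nℓ + 2k`, and for odd `n` only `k = ℓ / 2` gives
a multiple of `2ℓ`; hence the value sum of `f ^ ℓ` is `-(ℓ.choose (ℓ / 2)) * a ^ (ℓ / 2)`,
nonzero since `ℓ < p`. So the reduction of `f ^ ℓ` has degree `p - 1`, while Hermite's
criterion bounds it below `p - 1` for a permutation polynomial.
-/

open Polynomial Finset

namespace FiniteField

variable {K : Type*} [Field K] [Fintype K]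

local notation "q" => Fintype.card K

theorem sum_pow_of_pos {i : ℕ} (hi : 0 < i) :
    ∑ x : K, x ^ i = if q - 1 ∣ i then -1 else 0 := by
  classical
  rw [Fintype.sum_eq_add_sum_subtype_ne _ 0, zero_pow hi.ne', zero_add, ← sum_pow_units]
  exact Fintype.sum_equiv unitsEquivNeZero.symm _ _ fun _ => rfl

theorem natDegree_modByMonic_X_pow_card_sub_X_lt (f : K[X]) :
    (f %ₘ (X ^ q - X)).natDegree < q := by
  have hq := Fintype.one_lt_card (α := K)
  have hdeg := X_pow_card_sub_X_natDegree_eq K hq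
  have hne : (X ^ q - X : K[X]) ≠ 1 := fun h => by simp [h] at hdeg; omega
  have := natDegree_modByMonic_lt f (monic_X_pow_sub (by rw [degree_X]; exact_mod_cast hq)) hne
  rwa [hdeg] at this

theorem eval_modByMonic_X_pow_card_sub_X (f : K[X]) (x : K) :
    (f %ₘ (X ^ q - X)).eval x = f.eval x := by
  conv_rhs => rw [← modByMonic_add_div f (X ^ q - X)]
  simp [pow_card]

theorem coeff_modByMonic_X_pow_card_sub_X (f : K[X]) :
    (f %ₘ (X ^ q - X)).coeff (q - 1) = -∑ x : K, f.eval x := by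
  obtain ⟨m, hm⟩ : ∃ m, q = m + 1 + 1 :=
    ⟨q - 2, by have := Fintype.one_lt_card (α := K); omega⟩
  have hr := (natDegree_modByMonic_X_pow_card_sub_X_lt f).trans_eq hm
  calc _ = -∑ i ∈ range (m + 1 + 1), (f %ₘ (X ^ q - X)).coeff i * ∑ x : K, x ^ i := by
        have hlow : ∀ i ∈ range (m + 1),
            (f %ₘ (X ^ q - X)).coeff i * ∑ x : K, x ^ i = 0 := fun i hi => by
          rw [sum_pow_lt_card_sub_one K i (by simp at hi; omega), mul_zero]
        rw [sum_range_succ, sum_eq_zero hlow, sum_pow_of_pos m.succ_pos, if_pos (by rw [hm]; rfl)]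
        simp [hm]
    _ = -∑ x : K, (f %ₘ (X ^ q - X)).eval x := by
        simp_rw [eval_eq_sum_range' hr, mul_sum]
        rw [sum_comm]
    _ = -∑ x : K, f.eval x := by simp only [eval_modByMonic_X_pow_card_sub_X]

theorem degree_modByMonic_X_pow_card_sub_X_of_sum_eval_ne_zero {f : K[X]}
    (hf : ∑ x : K, f.eval x ≠ 0) :
    (f %ₘ (X ^ q - X)).degree = (q - 1 : ℕ) := by
  have hcoeff : (f %ₘ (X ^ q - X)).coeff (q - 1) ≠ 0 := by
    rwa [coeff_modByMonic_X_pow_card_sub_X, neg_ne_zero]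
  have hle := le_natDegree_of_ne_zero hcoeff
  have hlt := natDegree_modByMonic_X_pow_card_sub_X_lt f
  rw [degree_eq_natDegree fun h => hcoeff (by rw [h, coeff_zero])]
  exact_mod_cast (by omega : _ = q - 1)

theorem degree_pow_modByMonic_X_pow_card_sub_X_lt_of_bijective {f : K[X]}
    (hf : Function.Bijective fun x => f.eval x) {i : ℕ} (hi : i < q - 1) :
    (f ^ i %ₘ (X ^ q - X)).degree < (q - 1 : ℕ) := by
  have hsum : ∑ x : K, (f ^ i).eval x = 0 := by
    simp_rw [eval_pow]
    rw [Fintype.sum_bijective _ hf _ (· ^ i) fun _ => rfl]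
    exact sum_pow_lt_card_sub_one K i hi
  rw [degree_lt_iff_coeff_zero]
  intro m hm
  rcases hm.eq_or_lt with rfl | hm
  · rw [coeff_modByMonic_X_pow_card_sub_X, hsum, neg_zero]
  · exact coeff_eq_zero_of_natDegree_lt
      ((natDegree_modByMonic_X_pow_card_sub_X_lt _).trans_le (by omega))

end FiniteField

theorem Nat.two_mul_dvd_odd_mul_add_iff {n t k : ℕ} (hn : Odd n) (hk : k ≤ 2 * t) :
    2 * t ∣ n * t + k ↔ k = t := by
  obtain ⟨s, rfl⟩ := hn
  rw [show (2 * s + 1) * t + k = 2 * t * s + (t + k) by ring,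
    Nat.dvd_add_right (dvd_mul_right _ _)]
  rcases t.eq_zero_or_pos with rfl | ht
  · omega
  constructor
  · intro h
    have := Nat.eq_of_dvd_of_lt_two_mul (by omega) h (by omega)
    omega
  · rintro rfl
    exact ⟨1, by ring⟩

theorem sum_pow_odd_mul_sq_add {K : Type*} [Field K] [Fintype K] {ℓ t n : ℕ}
    (hq : Fintype.card K = 2 * ℓ + 1) (ht : ℓ = 2 * t) (hn : Odd n) (a : K) :
    ∑ x : K, (x ^ n * (x ^ 2 + a)) ^ ℓ = -(ℓ.choose t * a ^ t) := by
  have hℓ : 0 < ℓ := by have := Fintype.one_lt_card (α := K); omega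
  have hexp (k : ℕ) (hk : k ∈ range (ℓ + 1)) :
      ∑ x : K, x ^ (n * ℓ + 2 * k) = if k = t then -1 else 0 := by
    have := hn.pos
    rw [FiniteField.sum_pow_of_pos (by positivity)]
    refine if_congr ?_ rfl rfl
    rw [hq, Nat.add_sub_cancel, ht, show n * (2 * t) + 2 * k = 2 * (n * t + k) by ring,
      Nat.mul_dvd_mul_iff_left two_pos, Nat.two_mul_dvd_odd_mul_add_iff hn (by simp at hk; omega)]
  calc ∑ x : K, (x ^ n * (x ^ 2 + a)) ^ ℓ
      = ∑ x : K, ∑ k ∈ range (ℓ + 1), ℓ.choose k * a ^ (ℓ - k) * x ^ (n * ℓ + 2 * k) := by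
        refine sum_congr rfl fun x _ => ?_
        rw [mul_pow, add_pow, mul_sum]
        refine sum_congr rfl fun k _ => ?_
        ring
    _ = ∑ k ∈ range (ℓ + 1), ℓ.choose k * a ^ (ℓ - k) * if k = t then -1 else 0 := by
        rw [sum_comm]
        refine sum_congr rfl fun k hk => ?_
        rw [← mul_sum, hexp k hk]
    _ = -(ℓ.choose t * a ^ t) := by
        simp_rw [mul_ite, mul_neg_one, mul_zero]
        rw [sum_ite_eq' (range (ℓ + 1)) t, if_pos (by simp; omega), show ℓ - t = t by omega]

theorem stmt_14_general (p ℓ : ℕ) (hp : p.Prime) (hpl : p = 2 * ℓ + 1)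
    (hleven : Even ℓ)
    (n : ℕ) (hnodd : Odd n)
    (a : ZMod p) (ha : a ≠ 0) :
    (((X ^ n * (X ^ 2 + C a)) ^ ℓ %ₘ (X ^ p - X)).degree
        = ((p - 1 : ℕ) : WithBot ℕ)) ∧
      ¬ Function.Bijective
        (fun x : ZMod p => Polynomial.eval x (X ^ n * (X ^ 2 + C a))) := by
  have := Fact.mk hp
  obtain ⟨t, ht⟩ := hleven
  have hℓ : 0 < ℓ := by have := hp.two_le; omega
  have hchoose : (ℓ.choose t : ZMod p) ≠ 0 := by
    rw [Ne, ZMod.natCast_eq_zero_iff, ← hp.coprime_iff_not_dvd]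
    exact hp.coprime_choose_of_lt (by omega) (by omega)
  have hsum : ∑ x : ZMod p, ((X ^ n * (X ^ 2 + C a)) ^ ℓ).eval x ≠ 0 := by
    simp only [eval_pow, eval_mul, eval_add, eval_X, eval_C]
    rw [sum_pow_odd_mul_sq_add (by rw [ZMod.card, hpl]) (by omega : ℓ = 2 * t) hnodd,
      neg_ne_zero]
    exact mul_ne_zero hchoose (pow_ne_zero t ha)
  have hdeg := FiniteField.degree_modByMonic_X_pow_card_sub_X_of_sum_eval_ne_zero hsum
  rw [ZMod.card] at hdeg
  refine ⟨hdeg, fun hbij => ?_⟩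
  have hermite := FiniteField.degree_pow_modByMonic_X_pow_card_sub_X_lt_of_bijective hbij
    (i := ℓ) (by rw [ZMod.card]; omega)
  rw [ZMod.card, hdeg] at hermite
  exact lt_irrefl _ hermite

theorem stmt_14 (p ℓ : ℕ) (hp : p.Prime) (hpl : p = 2 * ℓ + 1)
    (hl1 : 1 < ℓ) (hleven : Even ℓ)
    (n : ℕ) (hn : 0 < n) (hnodd : Odd n)
    (a : ZMod p) (ha : a ≠ 0) :
    (((X ^ n * (X ^ 2 + C a)) ^ ℓ %ₘ (X ^ p - X)).degree
        = ((p - 1 : ℕ) : WithBot ℕ)) ∧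
      ¬ Function.Bijective
        (fun x : ZMod p => Polynomial.eval x (X ^ n * (X ^ 2 + C a))) :=
  stmt_14_general p ℓ hp hpl hleven n hnodd a ha
end
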